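/- For n ≥ 1 and every A ∈ Mₙ, the quasi-potential satisfies F̃(A) := f̃(ρ(A)) ≤ F(A). -/

import Mathlib

open Matrix

attribute [local instance] Matrix.frobeniusNormedAddCommGroup Matrix.frobeniusNormedSpace

/-- The Saint Venant–Kirchhoff potential `F(A) = (1/4)‖AAᵀ − I‖²` with the Frobenius norm. -/
noncomputable def potF {n : ℕ} (A : Matrix (Fin n) (Fin n) ℝ) : ℝ :=
  (1 / 4) * ‖A * Aᵀ - 1‖ ^ 2

/-- Frobenius distance from `A` to the orthogonal group `Oₙ`. -/
noncomputable def rho {n : ℕ} (A : Matrix (Fin n) (Fin n) ℝ) : ℝ :=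
  Metric.infDist A {Q : Matrix (Fin n) (Fin n) ℝ | Q * Qᵀ = 1}

/-- The quasi-potential profile `f̃`. -/
noncomputable def ftilde (r : ℝ) : ℝ :=
  if r ≤ 1 then (1 / 4) * r ^ 2 * (2 - r) ^ 2 else 1 / 4

lemma ftilde_le_quarter {r : ℝ} (hr : 0 ≤ r) : ftilde r ≤ 1/4 := by
  unfold ftilde
  split
  · rename_i h
    nlinarith [mul_nonneg (sq_nonneg (1-r)) (mul_nonneg hr (show (0:ℝ) ≤ 2-r by linarith))]
  · exact le_rfl

lemma ftilde_mono {a b : ℝ} (ha : 0 ≤ a) (hab : a ≤ b) : ftilde a ≤ ftilde b := by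
  unfold ftilde
  by_cases hb : b ≤ 1
  · rw [if_pos (hab.trans hb), if_pos hb]
    have h0a : 0 ≤ a * (2 - a) := mul_nonneg ha (by linarith)
    have h0b : 0 ≤ b * (2 - b) := mul_nonneg (ha.trans hab) (by linarith)
    have hle : a * (2 - a) ≤ b * (2 - b) := by nlinarith
    nlinarith [mul_le_mul hle hle h0a h0b]
  · rw [if_neg hb]
    by_cases h1 : a ≤ 1
    · rw [if_pos h1]
      nlinarith [mul_nonneg (sq_nonneg (1-a)) (mul_nonneg ha (show (0:ℝ) ≤ 2-a by linarith))]
    · rw [if_neg h1]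

lemma frob_sq {n : ℕ} (X : Matrix (Fin n) (Fin n) ℝ) :
    ‖X‖ ^ 2 = Matrix.trace (X * Xᵀ) := by
  have h : (0:ℝ) ≤ ∑ i, ∑ j, ‖X i j‖ ^ (2:ℝ) := by positivity
  rw [Matrix.frobenius_norm_def, ← Real.rpow_natCast _ 2, ← Real.rpow_mul h]
  norm_num
  rw [Matrix.trace]
  simp only [Matrix.diag, Matrix.mul_apply, Matrix.transpose_apply]
  refine Finset.sum_congr rfl fun i _ => Finset.sum_congr rfl fun j _ => ?_
  ring

lemma trace_conj {n : ℕ} {U : Matrix (Fin n) (Fin n) ℝ} (h : Uᵀ * U = 1)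
    (M : Matrix (Fin n) (Fin n) ℝ) :
    Matrix.trace (U * M * Uᵀ) = Matrix.trace M := by
  rw [Matrix.trace_mul_comm, ← Matrix.mul_assoc, h, Matrix.one_mul]

lemma key_ineq {ι : Type*} [Fintype ι] (s : ι → ℝ) (hs : ∀ i, 0 ≤ s i) :
    ftilde (Real.sqrt (∑ i, (s i - 1)^2)) ≤ (1/4) * ∑ i, (s i^2 - 1)^2 := by
  set T := ∑ i, (s i - 1)^2 with hT
  have hT0 : 0 ≤ T := Finset.sum_nonneg fun i _ => sq_nonneg _
  have hTE : T ≤ ∑ i, (s i^2 - 1)^2 :=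
    Finset.sum_le_sum fun i _ => by nlinarith [hs i, sq_nonneg (s i - 1)]
  set t := Real.sqrt T with htdef
  have ht0 : 0 ≤ t := Real.sqrt_nonneg _
  have ht2 : t^2 = T := Real.sq_sqrt hT0
  by_cases h1 : t ≤ 1
  · unfold ftilde
    rw [if_pos h1]
    have hbd : ∀ i ∈ Finset.univ, (s i - 1)^2 * (2 - t)^2 ≤ (s i^2 - 1)^2 := by
      intro i _
      have h2 : (s i - 1)^2 ≤ T :=
        Finset.single_le_sum (f := fun i => (s i - 1)^2) (fun i _ => sq_nonneg _)
          (Finset.mem_univ i)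
      have habs : |s i - 1| ≤ t := by
        rw [← Real.sqrt_sq_eq_abs]
        exact Real.sqrt_le_sqrt h2
      have h3 := abs_le.mp habs
      have h4 : (0:ℝ) ≤ 2 - t := by linarith
      have h5 : 2 - t ≤ s i + 1 := by
        have := hs i
        linarith [h3.1]
      nlinarith [mul_le_mul_of_nonneg_left (pow_le_pow_left₀ h4 h5 2) (sq_nonneg (s i - 1))]
    have hsum := Finset.sum_le_sum hbd
    rw [← Finset.sum_mul] at hsum
    calc (1/4) * t^2 * (2-t)^2 = (1/4) * (T * (2-t)^2) := by rw [ht2]; ring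
      _ ≤ (1/4) * ∑ i, (s i^2-1)^2 := by linarith
  · unfold ftilde
    rw [if_neg h1]
    push_neg at h1
    nlinarith

theorem stmt14 {n : ℕ} (hn : 1 ≤ n) (A : Matrix (Fin n) (Fin n) ℝ) :
    ftilde (rho A) ≤ potF A := by
  classical
  have hrho0 : 0 ≤ rho A := Metric.infDist_nonneg
  by_cases hbig : 1 ≤ ‖A * Aᵀ - 1‖
  · have h1 : ftilde (rho A) ≤ 1/4 := ftilde_le_quarter hrho0
    have h2 : (1/4:ℝ) ≤ potF A := by
      unfold potF
      nlinarith [hbig, norm_nonneg (A * Aᵀ - (1 : Matrix (Fin n) (Fin n) ℝ))]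
    linarith
  · push_neg at hbig
    have he0 : 0 ≤ ‖A * Aᵀ - 1‖ := norm_nonneg _
    -- spectral theorem setup
    have hct : Aᴴ = Aᵀ := Matrix.conjTranspose_eq_transpose_of_trivial A
    have hW : (A * Aᵀ).IsHermitian := by
      rw [← hct]; exact Matrix.isHermitian_mul_conjTranspose_self A
    set d : Fin n → ℝ := hW.eigenvalues with hd_def
    have hps : (A * Aᵀ).PosSemidef := by
      rw [← hct]; exact Matrix.posSemidef_self_mul_conjTranspose A
    have hd0 : ∀ i, 0 ≤ d i := fun i => hps.eigenvalues_nonneg i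
    set U : Matrix (Fin n) (Fin n) ℝ := (hW.eigenvectorUnitary : Matrix (Fin n) (Fin n) ℝ)
      with hU_def
    have hUstar : star U = Uᵀ := by
      rw [Matrix.star_eq_conjTranspose, Matrix.conjTranspose_eq_transpose_of_trivial]
    have hUU : U * Uᵀ = 1 := by
      rw [← hUstar]
      exact Matrix.mem_unitaryGroup_iff.mp (hW.eigenvectorUnitary).2
    have hUU' : Uᵀ * U = 1 := by
      rw [← hUstar]
      exact Matrix.mem_unitaryGroup_iff'.mp (hW.eigenvectorUnitary).2
    have hdiag : Matrix.diagonal (RCLike.ofReal ∘ hW.eigenvalues) = Matrix.diagonal d := by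
      congr 1
    have hspec : A * Aᵀ = U * Matrix.diagonal d * Uᵀ := by
      have h := hW.spectral_theorem
      rw [hdiag] at h
      rw [h, Unitary.conjStarAlgAut_apply, ← Unitary.coe_star, ← hU_def, ← hUstar]
      rfl
    -- eigenvalues close to 1
    have hE : ‖A * Aᵀ - 1‖^2 = ∑ i, (d i - 1)^2 := by
      have hWm1 : A * Aᵀ - 1 = U * Matrix.diagonal (fun i => d i - 1) * Uᵀ := by
        have hdg : Matrix.diagonal (fun i => d i - 1)
            = Matrix.diagonal d - 1 := by
          rw [← Matrix.diagonal_one, Matrix.diagonal_sub]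
        rw [hdg, mul_sub, sub_mul, mul_one, hUU, hspec]
      rw [frob_sq, hWm1]
      rw [Matrix.transpose_mul, Matrix.transpose_mul, Matrix.transpose_transpose,
        Matrix.diagonal_transpose]
      have : U * Matrix.diagonal (fun i => d i - 1) * Uᵀ *
          (Uᵀᵀ * (Matrix.diagonal (fun i => d i - 1) * Uᵀ))
          = U * (Matrix.diagonal (fun i => d i - 1) * Matrix.diagonal (fun i => d i - 1)) * Uᵀ := by
        rw [Matrix.transpose_transpose]
        rw [show U * Matrix.diagonal (fun i => d i - 1) * Uᵀ *
          (U * (Matrix.diagonal (fun i => d i - 1) * Uᵀ))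
          = U * Matrix.diagonal (fun i => d i - 1) * (Uᵀ * U) *
            (Matrix.diagonal (fun i => d i - 1) * Uᵀ) by
            simp only [Matrix.mul_assoc]]
        rw [hUU', Matrix.mul_one]
        simp only [Matrix.mul_assoc]
      rw [Matrix.transpose_transpose] at this
      rw [this, trace_conj hUU', Matrix.diagonal_mul_diagonal, Matrix.trace_diagonal]
      exact Finset.sum_congr rfl fun i _ => (sq (d i - 1)).symm
    have hdpos : ∀ i, 0 < d i := by
      intro i
      have h2 : (d i - 1)^2 ≤ ∑ j, (d j - 1)^2 :=
        Finset.single_le_sum (f := fun j => (d j - 1)^2) (fun j _ => sq_nonneg _)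
          (Finset.mem_univ i)
      nlinarith [sq_nonneg (‖A * Aᵀ - 1‖ - 1)]
    set s : Fin n → ℝ := fun i => Real.sqrt (d i) with hs_def
    have hs0 : ∀ i, 0 < s i := fun i => Real.sqrt_pos.mpr (hdpos i)
    have hs2 : ∀ i, s i ^ 2 = d i := fun i => Real.sq_sqrt (hd0 i)
    set P : Matrix (Fin n) (Fin n) ℝ := U * Matrix.diagonal (fun i => (s i)⁻¹) * Uᵀ with hP_def
    have hPt : Pᵀ = P := by
      rw [hP_def, Matrix.transpose_mul, Matrix.transpose_mul, Matrix.transpose_transpose,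
        Matrix.diagonal_transpose, Matrix.mul_assoc]
    set Q : Matrix (Fin n) (Fin n) ℝ := P * A with hQ_def
    have hQt : Qᵀ = Aᵀ * P := by rw [hQ_def, Matrix.transpose_mul, hPt]
    -- P * (A*Aᵀ) = U * diagonal (s⁻¹ * d) * Uᵀ
    have hPW : ∀ v : Fin n → ℝ, (U * Matrix.diagonal v * Uᵀ) * (A * Aᵀ)
        = U * Matrix.diagonal (fun i => v i * d i) * Uᵀ := by
      intro v
      rw [hspec, show U * Matrix.diagonal v * Uᵀ * (U * Matrix.diagonal d * Uᵀ)
        = U * Matrix.diagonal v * (Uᵀ * U) * (Matrix.diagonal d * Uᵀ) by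
          simp only [Matrix.mul_assoc], hUU', Matrix.mul_one,
        show U * Matrix.diagonal v * (Matrix.diagonal d * Uᵀ)
          = U * (Matrix.diagonal v * Matrix.diagonal d) * Uᵀ by simp only [Matrix.mul_assoc],
        Matrix.diagonal_mul_diagonal]
    have hQQ : Q * Qᵀ = 1 := by
      rw [hQ_def, hQt, show P * A * (Aᵀ * P) = P * (A * Aᵀ) * P by simp only [Matrix.mul_assoc],
        hP_def, hPW]
      rw [show U * Matrix.diagonal (fun i => (s i)⁻¹ * d i) * Uᵀ *
          (U * Matrix.diagonal (fun i => (s i)⁻¹) * Uᵀ)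
          = U * Matrix.diagonal (fun i => (s i)⁻¹ * d i) * (Uᵀ * U) *
            (Matrix.diagonal (fun i => (s i)⁻¹) * Uᵀ) by simp only [Matrix.mul_assoc], hUU',
        Matrix.mul_one,
        show U * Matrix.diagonal (fun i => (s i)⁻¹ * d i) * (Matrix.diagonal (fun i => (s i)⁻¹) * Uᵀ)
          = U * (Matrix.diagonal (fun i => (s i)⁻¹ * d i) * Matrix.diagonal (fun i => (s i)⁻¹)) * Uᵀ
          by simp only [Matrix.mul_assoc], Matrix.diagonal_mul_diagonal]
      have : (fun i => (s i)⁻¹ * d i * (s i)⁻¹) = fun _ => (1:ℝ) := by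
        funext i
        have hsne := (hs0 i).ne'
        rw [← hs2 i, sq,
          show (s i)⁻¹ * (s i * s i) * (s i)⁻¹ = (s i)⁻¹ * s i * (s i * (s i)⁻¹) from by ring,
          inv_mul_cancel₀ hsne, mul_inv_cancel₀ hsne, one_mul]
      rw [this, Matrix.diagonal_one, Matrix.mul_one, hUU]
    -- distance computation
    have htrAA : Matrix.trace (A * Aᵀ) = ∑ i, d i := by
      rw [hspec, trace_conj hUU', Matrix.trace_diagonal]
    have htrQA : Matrix.trace (Q * Aᵀ) = ∑ i, s i := by
      rw [hQ_def, show P * A * Aᵀ = P * (A * Aᵀ) by rw [Matrix.mul_assoc], hP_def, hPW,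
        trace_conj hUU', Matrix.trace_diagonal]
      refine Finset.sum_congr rfl fun i _ => ?_
      have hsne := (hs0 i).ne'
      rw [← hs2 i, sq, ← mul_assoc, inv_mul_cancel₀ hsne, one_mul]
    have htrAQ : Matrix.trace (A * Qᵀ) = ∑ i, s i := by
      rw [← htrQA, Matrix.trace_mul_comm, hQt, hQ_def]
      rw [show Aᵀ * P * A = Aᵀ * (P * A) by rw [Matrix.mul_assoc], Matrix.trace_mul_comm]
    have hAQ : ‖A - Q‖^2 = ∑ i, (s i - 1)^2 := by
      rw [frob_sq, Matrix.transpose_sub, Matrix.sub_mul, Matrix.mul_sub, Matrix.mul_sub,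
        Matrix.trace_sub, Matrix.trace_sub, Matrix.trace_sub, htrAA, htrAQ, htrQA, hQQ,
        Matrix.trace_one]
      have : ∑ i, (s i - 1)^2 = (∑ i, d i) - (∑ i, s i) - ((∑ i, s i) - (Fintype.card (Fin n) : ℝ)) := by
        rw [← Finset.sum_sub_distrib]
        rw [show ((Fintype.card (Fin n) : ℝ)) = ∑ _i : Fin n, (1:ℝ) by simp]
        rw [← Finset.sum_sub_distrib, ← Finset.sum_sub_distrib]
        refine Finset.sum_congr rfl fun i _ => ?_
        rw [← hs2 i]; ring
      linarith [this]
    have hQmem : Q ∈ {Q : Matrix (Fin n) (Fin n) ℝ | Q * Qᵀ = 1} := hQQ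
    have hrle : rho A ≤ ‖A - Q‖ := by
      have := Metric.infDist_le_dist_of_mem (x := A) hQmem
      rwa [dist_eq_norm] at this
    have hAQnn : 0 ≤ ‖A - Q‖ := norm_nonneg _
    have hAQs : ‖A - Q‖ = Real.sqrt (∑ i, (s i - 1)^2) := by
      rw [← hAQ, Real.sqrt_sq hAQnn]
    have hkey := key_ineq s (fun i => (hs0 i).le)
    have hmon : ftilde (rho A) ≤ ftilde (Real.sqrt (∑ i, (s i - 1)^2)) := by
      apply ftilde_mono hrho0
      rw [← hAQs]; exact hrle
    have hpot : potF A = (1/4) * ∑ i, (s i^2 - 1)^2 := by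
      unfold potF
      rw [hE]
      congr 1
      exact Finset.sum_congr rfl fun i _ => by rw [hs2 i]
    rw [hpot]
    exact hmon.trans hkey
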